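/- The unique solution ((y,p),(λ,μ)) ∈ U × X of the first-order mixed formulation is the unique saddle point of the Lagrangian 𝓛((y,p),(λ,μ)) := ½a((y,p),(y,p)) + b((y,p),(λ,μ)) − l(y,p), and it satisfies ‖(y,p)‖_U ≤ ‖ρ₀⁻¹y_obs‖_{L²(q_T)} and ‖(λ,μ)‖_X ≤ 2√(max{C_{Ω,T}ρ⋆⁻²‖ρ₁‖²_{L^∞(Q_T)} + η₁, C_{Ω,T}ρ⋆⁻²‖ρ‖²_{L^∞(Q_T)} + η₂}) ‖ρ₀⁻¹y_obs‖_{L²(q_T)}, where C_{Ω,T} is the energy-estimate constant for the first-order parabolic system. -/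

import Mathlib

/-!
The Lagrangian is affine in the multiplier, so it is bounded above in `(λ, μ)` only on the
constraint `Jm u = 0 ∧ Im u = 0`, where it does not depend on `(λ, μ)`; in `u` it is a convex
quadratic, minimal exactly where its derivative, the first equation of the mixed formulation,
vanishes. Hence saddle points and solutions of the mixed formulation coincide. Uniqueness holds
because the `U`-norm controls `(obsU, Jm, Im)` and `(Im, Jm)` is onto. Testing the first equation
with `u` gives `‖obsU u‖ ≤ ‖g‖`; testing it with a lift `w` of `(λ, μ)` gives
`‖λ‖² + ‖μ‖² = ⟪obsU w, g - obsU u⟫ ≤ 2‖g‖‖obsU w‖`, and the energy estimate bounds `‖obsU w‖`.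
-/

open scoped RealInnerProductSpace

variable {U HQ VQ Hq : Type*}
  [NormedAddCommGroup U] [InnerProductSpace ℝ U] [CompleteSpace U]
  [NormedAddCommGroup HQ] [InnerProductSpace ℝ HQ] [CompleteSpace HQ]
  [NormedAddCommGroup VQ] [InnerProductSpace ℝ VQ] [CompleteSpace VQ]
  [NormedAddCommGroup Hq] [InnerProductSpace ℝ Hq] [CompleteSpace Hq]

/-- The Lagrangian `𝓛((y,p),(λ,μ)) = ½ a((y,p),(y,p)) + b((y,p),(λ,μ)) − l(y,p)`. -/
noncomputable def Lagr1 (obsU : U →L[ℝ] Hq) (Jm : U →L[ℝ] VQ) (Im : U →L[ℝ] HQ)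
    (g : Hq) (u : U) (lm : HQ × VQ) : ℝ :=
  (1 / 2) * ⟪obsU u, obsU u⟫ + (⟪Jm u, lm.2⟫ + ⟪Im u, lm.1⟫) - ⟪obsU u, g⟫

def IsSaddlePoint {α β γ : Type*} [Preorder γ] (L : α → β → γ) (x : α) (y : β) : Prop :=
  (∀ y', L x y' ≤ L x y) ∧ ∀ x', L x y ≤ L x' y

theorem eq_zero_of_forall_nonneg_mul_sq_add_mul {a b : ℝ} (h : ∀ t : ℝ, 0 ≤ a * t ^ 2 + b * t) :
    b = 0 := by
  have hdiscr : discrim a b 0 ≤ 0 := discrim_le_zero fun t => by simpa [sq] using h t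
  rw [discrim, mul_zero, sub_zero] at hdiscr
  exact pow_eq_zero_iff two_ne_zero |>.mp (le_antisymm hdiscr (sq_nonneg b))

theorem le_of_sq_le_mul {x c : ℝ} (hc : 0 ≤ c) (h : x ^ 2 ≤ c * x) : x ≤ c := by
  nlinarith

theorem mul_add_mul_le_max_mul_add {K a b x y η₁ η₂ : ℝ} (hη₁ : 0 ≤ η₁) (hη₂ : 0 ≤ η₂)
    (hx : 0 ≤ x) (hy : 0 ≤ y) :
    K * (a * x + b * y) ≤ max (K * b + η₁) (K * a + η₂) * (x + y) := by
  have ha : K * a ≤ max (K * b + η₁) (K * a + η₂) :=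
    (le_add_of_nonneg_right hη₂).trans (le_max_right _ _)
  have hb : K * b ≤ max (K * b + η₁) (K * a + η₂) :=
    (le_add_of_nonneg_right hη₁).trans (le_max_left _ _)
  calc K * (a * x + b * y) = K * a * x + K * b * y := by ring
    _ ≤ max (K * b + η₁) (K * a + η₂) * x + max (K * b + η₁) (K * a + η₂) * y :=
        add_le_add (mul_le_mul_of_nonneg_right ha hx) (mul_le_mul_of_nonneg_right hb hy)
    _ = max (K * b + η₁) (K * a + η₂) * (x + y) := by ring

section InnerProduct

variable {E H V K : Type*}
  [NormedAddCommGroup E] [InnerProductSpace ℝ E]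
  [NormedAddCommGroup H] [InnerProductSpace ℝ H]
  [NormedAddCommGroup V] [InnerProductSpace ℝ V]
  [NormedAddCommGroup K] [InnerProductSpace ℝ K]

theorem eq_zero_and_eq_zero_of_inner_self_add_inner_self_nonpos {x : V} {y : H}
    (h : ⟪x, x⟫ + ⟪y, y⟫ ≤ 0) : x = 0 ∧ y = 0 := by
  have hx := real_inner_self_nonneg (x := x)
  have hy := real_inner_self_nonneg (x := y)
  exact ⟨inner_self_eq_zero (𝕜 := ℝ) |>.mp (by linarith),
    inner_self_eq_zero (𝕜 := ℝ) |>.mp (by linarith)⟩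

theorem norm_le_of_inner_self_eq_inner {x g : K} (h : ⟪x, x⟫ = ⟪x, g⟫) : ‖x‖ ≤ ‖g‖ := by
  have hsq : ‖x‖ ^ 2 ≤ ‖g‖ * ‖x‖ := by
    rw [← real_inner_self_eq_norm_sq, h, mul_comm]
    exact real_inner_le_norm x g
  exact le_of_sq_le_mul (norm_nonneg g) hsq

variable (obsU : E →L[ℝ] K) (Jm : E →L[ℝ] V) (Im : E →L[ℝ] H) (g : K)

def PrimalEq (u : E) (lm : H × V) : Prop :=
  ∀ w : E, ⟪obsU u, obsU w⟫ + (⟪Jm w, lm.2⟫ + ⟪Im w, lm.1⟫) = ⟪obsU w, g⟫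

/-- The mixed formulation, its second equation `b(u, ·) = 0` read as `Jm u = 0 ∧ Im u = 0`. -/
def IsMixedSolution (u : E) (lm : H × V) : Prop :=
  PrimalEq obsU Jm Im g u lm ∧ Jm u = 0 ∧ Im u = 0

theorem Lagr1_add_left (v w : E) (lm : H × V) :
    Lagr1 obsU Jm Im g (v + w) lm = Lagr1 obsU Jm Im g v lm
      + (⟪obsU v, obsU w⟫ + (⟪Jm w, lm.2⟫ + ⟪Im w, lm.1⟫) - ⟪obsU w, g⟫)
      + (1 / 2) * ⟪obsU w, obsU w⟫ := by
  simp only [Lagr1, map_add, inner_add_left, inner_add_right]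
  rw [real_inner_comm (obsU w) (obsU v)]
  ring

theorem Lagr1_add_right (v : E) (lm lm' : H × V) :
    Lagr1 obsU Jm Im g v (lm + lm') =
      Lagr1 obsU Jm Im g v lm + (⟪Jm v, lm'.2⟫ + ⟪Im v, lm'.1⟫) := by
  simp only [Lagr1, Prod.fst_add, Prod.snd_add, inner_add_right]
  ring

variable {obsU Jm Im g}

theorem forall_Lagr1_le_iff {v : E} {lm : H × V} :
    (∀ lm', Lagr1 obsU Jm Im g v lm' ≤ Lagr1 obsU Jm Im g v lm) ↔ Jm v = 0 ∧ Im v = 0 := by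
  constructor
  · intro h
    have hsq := h (lm + (Im v, Jm v))
    rw [Lagr1_add_right, add_le_iff_nonpos_right] at hsq
    exact eq_zero_and_eq_zero_of_inner_self_add_inner_self_nonpos hsq
  · rintro ⟨hJ, hI⟩ lm'
    simp [Lagr1, hJ, hI]

theorem forall_Lagr1_le_Lagr1_iff {v : E} {lm : H × V} :
    (∀ v', Lagr1 obsU Jm Im g v lm ≤ Lagr1 obsU Jm Im g v' lm) ↔ PrimalEq obsU Jm Im g v lm := by
  constructor
  · intro h w
    have hquad : ∀ t : ℝ, 0 ≤ (1 / 2 * ⟪obsU w, obsU w⟫) * t ^ 2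
        + (⟪obsU v, obsU w⟫ + (⟪Jm w, lm.2⟫ + ⟪Im w, lm.1⟫) - ⟪obsU w, g⟫) * t := by
      intro t
      have hmin := h (v + t • w)
      rw [Lagr1_add_left] at hmin
      simp only [map_smul, real_inner_smul_left, real_inner_smul_right] at hmin
      linarith
    exact sub_eq_zero.mp (eq_zero_of_forall_nonneg_mul_sq_add_mul hquad)
  · intro h v'
    have hexp := Lagr1_add_left obsU Jm Im g v (v' - v) lm
    rw [add_sub_cancel, h (v' - v), sub_self, add_zero] at hexp
    rw [hexp]
    linarith [real_inner_self_nonneg (F := K) (x := obsU (v' - v))]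

theorem isSaddlePoint_Lagr1_iff {v : E} {lm : H × V} :
    IsSaddlePoint (Lagr1 obsU Jm Im g) v lm ↔ IsMixedSolution obsU Jm Im g v lm :=
  (and_congr forall_Lagr1_le_iff forall_Lagr1_le_Lagr1_iff).trans and_comm

theorem IsMixedSolution.norm_obs_le {u : E} {lm : H × V}
    (hu : IsMixedSolution obsU Jm Im g u lm) : ‖obsU u‖ ≤ ‖g‖ := by
  obtain ⟨hEL, hJ, hI⟩ := hu
  refine norm_le_of_inner_self_eq_inner ?_
  simpa [hJ, hI] using hEL u

theorem IsMixedSolution.unique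
    (hinj : ∀ w : E, obsU w = 0 → Jm w = 0 → Im w = 0 → w = 0)
    (hsurj : ∀ (lam : H) (mu : V), ∃ w : E, Im w = lam ∧ Jm w = mu)
    {u v : E} {lm lm' : H × V}
    (hu : IsMixedSolution obsU Jm Im g u lm) (hv : IsMixedSolution obsU Jm Im g v lm') :
    v = u ∧ lm' = lm := by
  obtain ⟨hELu, hJu, hIu⟩ := hu
  obtain ⟨hELv, hJv, hIv⟩ := hv
  have hdiff : ∀ w : E,
      ⟪obsU (v - u), obsU w⟫ + (⟪Jm w, lm'.2 - lm.2⟫ + ⟪Im w, lm'.1 - lm.1⟫) = 0 := by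
    intro w
    simp only [map_sub, inner_sub_left, inner_sub_right]
    linarith [hELu w, hELv w]
  have hJ : Jm (v - u) = 0 := by rw [map_sub, hJu, hJv, sub_zero]
  have hI : Im (v - u) = 0 := by rw [map_sub, hIu, hIv, sub_zero]
  have hobs : obsU (v - u) = 0 := by
    simpa [hJ, hI, map_sub] using hdiff (v - u)
  have hvu : v = u := sub_eq_zero.mp (hinj _ hobs hJ hI)
  obtain ⟨w, hIw, hJw⟩ := hsurj (lm'.1 - lm.1) (lm'.2 - lm.2)
  have hsq : ⟪lm'.2 - lm.2, lm'.2 - lm.2⟫ + ⟪lm'.1 - lm.1, lm'.1 - lm.1⟫ ≤ 0 := by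
    simpa [hvu, hJw, hIw] using (hdiff w).le
  obtain ⟨h2, h1⟩ := eq_zero_and_eq_zero_of_inner_self_add_inner_self_nonpos hsq
  exact ⟨hvu, Prod.ext (sub_eq_zero.mp h1) (sub_eq_zero.mp h2)⟩

theorem IsMixedSolution.sqrt_norm_sq_add_norm_sq_le {u w : E} {lam : H} {mu : V} {M : ℝ}
    (hu : IsMixedSolution obsU Jm Im g u (lam, mu)) (hIw : Im w = lam) (hJw : Jm w = mu)
    (hw : ‖obsU w‖ ^ 2 ≤ M * (‖lam‖ ^ 2 + ‖mu‖ ^ 2)) :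
    √(‖lam‖ ^ 2 + ‖mu‖ ^ 2) ≤ 2 * √M * ‖g‖ := by
  set S := ‖lam‖ ^ 2 + ‖mu‖ ^ 2
  have hS : S = ⟪obsU w, g - obsU u⟫ := by
    have hEL := hu.1 w
    simp only [hIw, hJw, real_inner_self_eq_norm_sq] at hEL
    rw [inner_sub_right, real_inner_comm (obsU u)]
    linarith
  have hgu : ‖g - obsU u‖ ≤ 2 * ‖g‖ :=
    (norm_sub_le _ _).trans (by linarith [hu.norm_obs_le])
  have hobs : ‖obsU w‖ ≤ √M * √S := by
    rw [← Real.sqrt_mul' _ (by positivity), ← Real.sqrt_sq (norm_nonneg (obsU w))]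
    exact Real.sqrt_le_sqrt hw
  refine le_of_sq_le_mul (by positivity) ?_
  calc √S ^ 2 = S := Real.sq_sqrt (by positivity)
    _ ≤ ‖obsU w‖ * ‖g - obsU u‖ := hS ▸ real_inner_le_norm _ _
    _ ≤ (√M * √S) * (2 * ‖g‖) := mul_le_mul hobs hgu (norm_nonneg _) (by positivity)
    _ = 2 * √M * ‖g‖ * √S := by ring

end InnerProduct

theorem firstOrder_solution_saddle_point_and_estimates
    (obsU : U →L[ℝ] Hq) (Jm : U →L[ℝ] VQ) (Im : U →L[ℝ] HQ)
    (η₁ η₂ : ℝ) (hη₁ : 0 < η₁) (hη₂ : 0 < η₂)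
    (ρstar Mρ Mρ₁ CΩT : ℝ)
    (hnormU : ∀ u : U,
      ‖u‖ ^ 2 = ‖obsU u‖ ^ 2 + η₁ * ‖Jm u‖ ^ 2 + η₂ * ‖Im u‖ ^ 2)
    (hsolveU : ∀ (lam : HQ) (mu : VQ), ∃ u : U, Im u = lam ∧ Jm u = mu ∧
      ‖obsU u‖ ^ 2 ≤
        CΩT * ρstar⁻¹ ^ 2 * (Mρ ^ 2 * ‖lam‖ ^ 2 + Mρ₁ ^ 2 * ‖mu‖ ^ 2))
    (g : Hq) (u : U) (lam : HQ) (mu : VQ)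
    -- ((y,p),(λ,μ)) solves the first-order mixed formulation (3.5)
    (hsol : (∀ ub : U,
        ⟪obsU u, obsU ub⟫ + (⟪Jm ub, mu⟫ + ⟪Im ub, lam⟫) = ⟪obsU ub, g⟫) ∧
      (∀ (lamb : HQ) (mub : VQ), ⟪Jm u, mub⟫ + ⟪Im u, lamb⟫ = 0)) :
    -- (ii) it is the unique saddle point of the Lagrangian 𝓛
    ((∀ lm : HQ × VQ,
        Lagr1 obsU Jm Im g u lm ≤ Lagr1 obsU Jm Im g u (lam, mu)) ∧
      (∀ v : U,
        Lagr1 obsU Jm Im g u (lam, mu) ≤ Lagr1 obsU Jm Im g v (lam, mu))) ∧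
    (∀ (v : U) (lm : HQ × VQ),
      ((∀ lm' : HQ × VQ, Lagr1 obsU Jm Im g v lm' ≤ Lagr1 obsU Jm Im g v lm) ∧
        (∀ v' : U, Lagr1 obsU Jm Im g v lm ≤ Lagr1 obsU Jm Im g v' lm)) →
      v = u ∧ lm = (lam, mu)) ∧
    -- (iii) the estimates (3.6)
    ‖u‖ ≤ ‖g‖ ∧
    Real.sqrt (‖lam‖ ^ 2 + ‖mu‖ ^ 2) ≤
      2 * Real.sqrt (max (CΩT * ρstar⁻¹ ^ 2 * Mρ₁ ^ 2 + η₁)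
        (CΩT * ρstar⁻¹ ^ 2 * Mρ ^ 2 + η₂)) * ‖g‖ := by
  obtain ⟨hEL, hb⟩ := hsol
  have hu : IsMixedSolution obsU Jm Im g u (lam, mu) :=
    ⟨hEL, eq_zero_and_eq_zero_of_inner_self_add_inner_self_nonpos (hb (Im u) (Jm u)).le⟩
  have hinj : ∀ w : U, obsU w = 0 → Jm w = 0 → Im w = 0 → w = 0 := fun w hA hJ hI => by
    simpa [hA, hJ, hI] using hnormU w
  have hsurj : ∀ (lam : HQ) (mu : VQ), ∃ w : U, Im w = lam ∧ Jm w = mu := fun lam mu =>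
    (hsolveU lam mu).imp fun _ hw => ⟨hw.1, hw.2.1⟩
  have hnorm_u : ‖u‖ = ‖obsU u‖ := by
    have h := hnormU u
    rw [hu.2.1, hu.2.2] at h
    simpa using h
  obtain ⟨w, hIw, hJw, hw⟩ := hsolveU lam mu
  refine ⟨isSaddlePoint_Lagr1_iff.mpr hu,
    fun v lm hvlm => hu.unique hinj hsurj (isSaddlePoint_Lagr1_iff.mp hvlm),
    hnorm_u ▸ hu.norm_obs_le, hu.sqrt_norm_sq_add_norm_sq_le hIw hJw ?_⟩
  exact hw.trans (mul_add_mul_le_max_mul_add hη₁.le hη₂.le (sq_nonneg _) (sq_nonneg _))
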